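/- arXiv:1503.03820 — 2 statements merged into one kernel-verified Lean document; each statement's English description precedes it below -/
import Mathlib

section
/- If T' ≺ T are topologies on a finite set X, then the connected components of the quotient topology T/T' coincide with the connected components of T. -/
variable {X : Type*}

/-- The specialization quasi-order of a topology: `x ≤_T y` iff every
`T`-open set containing `x` contains `y`. -/
def leT (t : TopologicalSpace X) (x y : X) : Prop :=
  ∀ U : Set X, t.IsOpen U → x ∈ U → y ∈ U

/-- The specialization equivalence `∼_T`. -/
def simT (t : TopologicalSpace X) (x y : X) : Prop :=
  leT t x y ∧ leT t y x

/-- The topology of final segments of a relation `r`. -/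
def topOfRel (r : X → X → Prop) : TopologicalSpace X where
  IsOpen U := ∀ x ∈ U, ∀ y, r x y → y ∈ U
  isOpen_univ := fun _ _ y _ => Set.mem_univ y
  isOpen_inter := fun U V hU hV x hx y hr => ⟨hU x hx.1 y hr, hV x hx.2 y hr⟩
  isOpen_sUnion := fun S hS x hx y hr => by
    obtain ⟨U, hU, hxU⟩ := hx
    exact ⟨U, hU, hS U hU x hxU y hr⟩

/-- `T'` is finer than `T`: every `T`-open set is `T'`-open. -/
def finer (t' t : TopologicalSpace X) : Prop :=
  ∀ U : Set X, t.IsOpen U → t'.IsOpen U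

/-- The quasi-order of the quotient topology `T/T'`: the transitive closure of
`x R y ↔ (x ≤_T y or y ≤_{T'} x)`. -/
def quotRel (t t' : TopologicalSpace X) : X → X → Prop :=
  Relation.ReflTransGen (fun x y => leT t x y ∨ leT t' y x)

/-- The quotient topology `T/T'`. -/
def quotTop (t t' : TopologicalSpace X) : TopologicalSpace X :=
  topOfRel (quotRel t t')

/-- Restriction (subspace topology) of `t` to a subset `Y`. -/
def restrictT (t : TopologicalSpace X) (Y : Set X) : TopologicalSpace Y :=
  t.induced Subtype.val

/-- `T'` is `T`-admissible (`T' ⊚≺ T`). -/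
def adm (t' t : TopologicalSpace X) : Prop :=
  finer t' t ∧
  (∀ Y : Set X, @IsConnected X t' Y → restrictT t' Y = restrictT t Y) ∧
  (∀ x y : X,
    (quotRel t t' x y ∧ quotRel t t' y x) ↔ (quotRel t' t' x y ∧ quotRel t' t' y x))

/-! Finite spaces are Alexandrov spaces, whose connected components are the classes of the
equivalence relation generated by specialization. Every step of the quasi-order of `T/T'` is a
`T`-specialization in one direction or the other (as `T'` is finer than `T`), and every
`T`-specialization is one of its steps, so `T/T'` and `T` generate the same equivalence relation. -/

open Relation Function Set

theorem Relation.EqvGen.eqvGen_swap (r : X → X → Prop) : EqvGen (swap r) = EqvGen r := by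
  rw [← EqvGen.eqvGen_symmGen, ← EqvGen.eqvGen_symmGen r]
  congr 1
  ext a b
  exact symmGen_swap_apply r

theorem Specializes.mem_connectedComponent [TopologicalSpace X] {x y : X} (h : x ⤳ y) :
    y ∈ connectedComponent x :=
  isPreconnected_singleton.closure.subset_connectedComponent (subset_closure rfl)
    (specializes_iff_mem_closure.1 h)

theorem connectedComponent_eq_eqvGen_specializes [TopologicalSpace X] [AlexandrovDiscrete X]
    (x : X) : connectedComponent x = {y | EqvGen (· ⤳ ·) x y} := by
  apply Subset.antisymm
  · have hopen : IsOpen {y | EqvGen (· ⤳ ·) x y} :=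
      isOpen_iff_forall_specializes.2 fun _ _ hab hb => .trans _ _ _ hb (.symm _ _ (.rel _ _ hab))
    have hclosed : IsClosed {y | EqvGen (· ⤳ ·) x y} :=
      isOpen_compl_iff.1 <| isOpen_iff_forall_specializes.2 fun _ _ hab hb ha =>
        hb (.trans _ _ _ ha (.rel _ _ hab))
    exact IsClopen.connectedComponent_subset ⟨hclosed, hopen⟩ (EqvGen.refl x)
  · intro y hy
    induction hy with
    | rel _ _ hab => exact hab.mem_connectedComponent
    | refl => exact mem_connectedComponent
    | symm _ _ _ ih => exact connectedComponent_eq ih ▸ mem_connectedComponent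
    | trans _ _ _ _ _ hab hbc => exact connectedComponent_eq hab ▸ hbc

theorem leT_eq_swap_specializes (t : TopologicalSpace X) : leT t = swap (@Specializes X t) := by
  ext x y
  exact (@specializes_iff_forall_open X t y x).symm

theorem leT_topOfRel_reflTransGen (r : X → X → Prop) :
    leT (topOfRel (ReflTransGen r)) = ReflTransGen r := by
  ext x y
  exact ⟨fun hxy => hxy {z | ReflTransGen r x z} (fun _ hz _ => hz.trans) .refl,
    fun hxy _ hU hx => hU x hx y hxy⟩

theorem leT_quotTop (t t' : TopologicalSpace X) : leT (quotTop t t') = quotRel t t' :=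
  leT_topOfRel_reflTransGen _

theorem leT_of_finer {t' t : TopologicalSpace X} (h : finer t' t) {x y : X} (hxy : leT t' x y) :
    leT t x y :=
  fun U hU => hxy U (h U hU)

theorem eqvGen_quotRel {t t' : TopologicalSpace X} (h : finer t' t) :
    EqvGen (quotRel t t') = EqvGen (leT t) := by
  rw [quotRel, EqvGen.eqvGen_reflTransGen]
  refine le_antisymm (EqvGen.eqvGen_le ?_) (EqvGen.eqvGen_mono fun _ _ => .inl)
  rintro x y (hxy | hyx)
  · exact .rel _ _ hxy
  · exact .symm _ _ (.rel _ _ (leT_of_finer h hyx))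

/-- If T' ≺ T, the connected components of T/T' coincide with those of T. -/
theorem quot_connectedComponents [Finite X] (t t' : TopologicalSpace X)
    (h : finer t' t) (x : X) :
    @connectedComponent X (quotTop t t') x = @connectedComponent X t x := by
  have hspec : EqvGen (@Specializes X (quotTop t t')) = EqvGen (@Specializes X t) := by
    rw [← EqvGen.eqvGen_swap, ← leT_eq_swap_specializes, leT_quotTop, eqvGen_quotRel h,
      leT_eq_swap_specializes, EqvGen.eqvGen_swap]
  rw [@connectedComponent_eq_eqvGen_specializes X (quotTop t t') _ x,
    @connectedComponent_eq_eqvGen_specializes X t _ x, hspec]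
end

section
/- Let X₁, X₂ be disjoint finite sets, T₁ a topology on X₁ and T₂ on X₂, and T₁T₂ the product topology on X₁ ⊔ X₂ (Y open iff Y ∩ X₁ ∈ T₁ and Y ∩ X₂ ∈ T₂). Then U ⊚≺ T₁T₂ if and only if U = U₁U₂ with U₁ = U|_{X₁} ⊚≺ T₁ and U₂ = U|_{X₂} ⊚≺ T₂; consequently Γ(T₁T₂) = Γ(T₁)Γ(T₂), i.e. Γ is multiplicative for the disjoint-union product. -/
variable {X : Type*}

open scoped TensorProduct

/-- The free vector space on the set of topologies on `X`. -/
abbrev TVect (X : Type*) := TopologicalSpace X →₀ ℚ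

/-- The internal coproduct on basis elements. -/
noncomputable def GamFun (t : TopologicalSpace X) : TVect X ⊗[ℚ] TVect X :=
  ∑ᶠ (t' : TopologicalSpace X) (_ : adm t' t),
    (Finsupp.single t' (1 : ℚ)) ⊗ₜ[ℚ] (Finsupp.single (quotTop t t') (1 : ℚ))

/-- The internal coproduct as a linear map. -/
noncomputable def GamLin (X : Type*) : TVect X →ₗ[ℚ] TVect X ⊗[ℚ] TVect X :=
  Finsupp.lsum ℚ (fun t => LinearMap.smulRight (LinearMap.id : ℚ →ₗ[ℚ] ℚ) (GamFun t))

variable {X₁ X₂ : Type*}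

/-- The product topology on a disjoint union: a set is open iff its trace on
each summand is open. -/
def sumTop (t₁ : TopologicalSpace X₁) (t₂ : TopologicalSpace X₂) :
    TopologicalSpace (X₁ ⊕ X₂) where
  IsOpen U := t₁.IsOpen (Sum.inl ⁻¹' U) ∧ t₂.IsOpen (Sum.inr ⁻¹' U)
  isOpen_univ :=
    ⟨by rw [Set.preimage_univ]; exact t₁.isOpen_univ,
     by rw [Set.preimage_univ]; exact t₂.isOpen_univ⟩
  isOpen_inter := fun U V hU hV => by
    constructor
    · show t₁.IsOpen (Sum.inl ⁻¹' (U ∩ V))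
      rw [Set.preimage_inter]; exact t₁.isOpen_inter _ _ hU.1 hV.1
    · show t₂.IsOpen (Sum.inr ⁻¹' (U ∩ V))
      rw [Set.preimage_inter]; exact t₂.isOpen_inter _ _ hU.2 hV.2
  isOpen_sUnion := fun S hS => by
    letI := t₁; letI := t₂
    constructor
    · show t₁.IsOpen (Sum.inl ⁻¹' ⋃₀ S)
      rw [Set.preimage_sUnion]
      exact isOpen_biUnion fun U hU => (hS U hU).1
    · show t₂.IsOpen (Sum.inr ⁻¹' ⋃₀ S)
      rw [Set.preimage_sUnion]
      exact isOpen_biUnion fun U hU => (hS U hU).2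

/-- The product `m : T_{X₁} ⊗ T_{X₂} → T_{X₁ ⊔ X₂}` on free vector spaces. -/
noncomputable def mProd (X₁ X₂ : Type*) :
    TVect X₁ ⊗[ℚ] TVect X₂ →ₗ[ℚ] TVect (X₁ ⊕ X₂) :=
  (Finsupp.lmapDomain ℚ ℚ
      (fun p : TopologicalSpace X₁ × TopologicalSpace X₂ => sumTop p.1 p.2)).comp
    (finsuppTensorFinsupp' ℚ _ _).toLinearMap

/-!
A topology finer than `T₁T₂` has both summands open, so it is the product of its two
restrictions. On products, every ingredient of admissibility splits summand-wise: connected sets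
lie in one summand, and the specialization preorders, hence the quotient relations, are the
disjoint sums (`Sum.LiftRel`) of those of the factors. So `U ↦ (U|_{X₁}, U|_{X₂})` is a
bijection from the admissible refinements of `T₁T₂` onto pairs of admissible refinements,
compatible with quotients, and it reindexes the sum defining `Γ(T₁T₂)`.
-/

open Function Topology

theorem Relation.reflTransGen_liftRel {α β : Type*} {r : α → α → Prop} {s : β → β → Prop} :
    Relation.ReflTransGen (Sum.LiftRel r s) =
      Sum.LiftRel (Relation.ReflTransGen r) (Relation.ReflTransGen s) := by
  ext x y
  constructor
  · intro h
    induction h with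
    | refl => cases x <;> constructor <;> rfl
    | tail _ hbc ih =>
      cases ih with
      | inl hab => cases hbc with | inl h => exact .inl (hab.tail h)
      | inr hab => cases hbc with | inr h => exact .inr (hab.tail h)
  · rintro (h | h)
    · exact h.lift Sum.inl fun _ _ => Sum.LiftRel.inl
    · exact h.lift Sum.inr fun _ _ => Sum.LiftRel.inr

theorem Equiv.induced_injective {α β : Type*} (e : α ≃ β) :
    Injective (TopologicalSpace.induced e) := fun t t' h => by
  simpa only [induced_compose, e.self_comp_symm, @induced_id _ t, @induced_id _ t'] using
    congrArg (TopologicalSpace.induced e.symm) h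

lemma leT_iff_specializes {t : TopologicalSpace X} {x y : X} :
    leT t x y ↔ @Specializes X t y x :=
  (@specializes_iff_forall_open X t y x).symm

lemma restrictT_image_eq_iff {α β : Type*} {f : α → β} (hf : Injective f)
    {t t' : TopologicalSpace β} {Y : Set α} :
    restrictT t (f '' Y) = restrictT t' (f '' Y) ↔
      restrictT (t.induced f) Y = restrictT (t'.induced f) Y := by
  have key : ∀ t : TopologicalSpace β,
      restrictT (t.induced f) Y = (restrictT t (f '' Y)).induced (Equiv.Set.image f Y hf) := by
    intro t
    simp only [restrictT, induced_compose]
    rfl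
  rw [key, key, (Equiv.induced_injective _).eq_iff]

section SumTop

variable {t₁ u₁ : TopologicalSpace X₁} {t₂ u₂ : TopologicalSpace X₂}

lemma induced_inl_sumTop : (sumTop t₁ t₂).induced Sum.inl = t₁ :=
  (@IsEmbedding.inl X₁ X₂ t₁ t₂).eq_induced.symm

lemma induced_inr_sumTop : (sumTop t₁ t₂).induced Sum.inr = t₂ :=
  (@IsEmbedding.inr X₁ X₂ t₁ t₂).eq_induced.symm

lemma sumTop_le_sumTop_iff : sumTop u₁ u₂ ≤ sumTop t₁ t₂ ↔ u₁ ≤ t₁ ∧ u₂ ≤ t₂ := by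
  refine ⟨fun h => ⟨?_, ?_⟩, fun h => sup_le_sup (coinduced_mono h.1) (coinduced_mono h.2)⟩
  · simpa only [induced_inl_sumTop] using induced_mono (g := Sum.inl) h
  · simpa only [induced_inr_sumTop] using induced_mono (g := Sum.inr) h

lemma eq_sumTop_induced_of_le {u : TopologicalSpace (X₁ ⊕ X₂)} (h : u ≤ sumTop t₁ t₂) :
    u = sumTop (u.induced Sum.inl) (u.induced Sum.inr) := by
  refine le_antisymm ?_ (sup_le (coinduced_le_iff_le_induced.2 le_rfl)
    (coinduced_le_iff_le_induced.2 le_rfl))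
  rintro U ⟨⟨V, hV, hVU⟩, ⟨W, hW, hWU⟩⟩
  have hL : IsOpen[u] (Set.range Sum.inl) := h _ (@isOpen_range_inl X₁ X₂ t₁ t₂)
  have hR : IsOpen[u] (Set.range Sum.inr) := h _ (@isOpen_range_inr X₁ X₂ t₁ t₂)
  have hU : U = V ∩ Set.range Sum.inl ∪ W ∩ Set.range Sum.inr := by
    simp only [Set.ext_iff, Set.mem_preimage] at hVU hWU
    ext (x | x) <;> simp [hVU, hWU]
  let _ := u
  rw [hU]
  exact (hV.inter hL).union (hW.inter hR)

lemma leT_sumTop : leT (sumTop t₁ t₂) = Sum.LiftRel (leT t₁) (leT t₂) := by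
  let _ := t₁; let _ := t₂
  ext (x | x) (y | y)
  · simp only [leT_iff_specializes, Sum.liftRel_inl_inl]
    exact IsEmbedding.inl.isInducing.specializes_iff
  · simp only [leT_iff_specializes, Sum.not_liftRel_inl_inr, iff_false]
    exact fun h => by simpa using h.mem_open isOpen_range_inl ⟨x, rfl⟩
  · simp only [leT_iff_specializes, Sum.not_liftRel_inr_inl, iff_false]
    exact fun h => by simpa using h.mem_open isOpen_range_inr ⟨x, rfl⟩
  · simp only [leT_iff_specializes, Sum.liftRel_inr_inr]
    exact IsEmbedding.inr.isInducing.specializes_iff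

lemma topOfRel_liftRel {r : X₁ → X₁ → Prop} {s : X₂ → X₂ → Prop} :
    topOfRel (Sum.LiftRel r s) = sumTop (topOfRel r) (topOfRel s) := by
  ext U
  show (∀ z ∈ U, ∀ w, Sum.LiftRel r s z w → w ∈ U) ↔
    (∀ x ∈ Sum.inl ⁻¹' U, ∀ y, r x y → y ∈ Sum.inl ⁻¹' U) ∧
      (∀ x ∈ Sum.inr ⁻¹' U, ∀ y, s x y → y ∈ Sum.inr ⁻¹' U)
  simp [Sum.forall]

lemma quotRel_sumTop {t₁' : TopologicalSpace X₁} {t₂' : TopologicalSpace X₂} :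
    quotRel (sumTop t₁ t₂) (sumTop t₁' t₂') = Sum.LiftRel (quotRel t₁ t₁') (quotRel t₂ t₂') := by
  have step : (fun z w => leT (sumTop t₁ t₂) z w ∨ leT (sumTop t₁' t₂') w z) =
      Sum.LiftRel (fun x y => leT t₁ x y ∨ leT t₁' y x) (fun x y => leT t₂ x y ∨ leT t₂' y x) := by
    rw [leT_sumTop, leT_sumTop]
    ext (x | x) (y | y) <;> simp
  rw [quotRel, step, Relation.reflTransGen_liftRel]
  rfl

lemma quotTop_sumTop {t₁' : TopologicalSpace X₁} {t₂' : TopologicalSpace X₂} :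
    quotTop (sumTop t₁ t₂) (sumTop t₁' t₂') = sumTop (quotTop t₁ t₁') (quotTop t₂ t₂') := by
  rw [quotTop, quotRel_sumTop, topOfRel_liftRel]
  rfl

lemma isConnected_sumTop_iff {Y : Set (X₁ ⊕ X₂)} :
    @IsConnected _ (sumTop t₁ t₂) Y ↔
      (∃ Y₁, @IsConnected _ t₁ Y₁ ∧ Y = Sum.inl '' Y₁) ∨
        ∃ Y₂, @IsConnected _ t₂ Y₂ ∧ Y = Sum.inr '' Y₂ :=
  @Sum.isConnected_iff X₁ X₂ t₁ t₂ Y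

end SumTop

lemma forall_liftRel_and_swap_iff {α β : Type*} {r r' : α → α → Prop} {s s' : β → β → Prop} :
    (∀ z w, (Sum.LiftRel r s z w ∧ Sum.LiftRel r s w z) ↔
        (Sum.LiftRel r' s' z w ∧ Sum.LiftRel r' s' w z)) ↔
      (∀ x y, (r x y ∧ r y x) ↔ (r' x y ∧ r' y x)) ∧
        ∀ x y, (s x y ∧ s y x) ↔ (s' x y ∧ s' y x) := by
  simp [Sum.forall]

section Admissible

variable {t₁ u₁ : TopologicalSpace X₁} {t₂ u₂ : TopologicalSpace X₂}

lemma finer_sumTop_iff : finer (sumTop u₁ u₂) (sumTop t₁ t₂) ↔ finer u₁ t₁ ∧ finer u₂ t₂ :=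
  sumTop_le_sumTop_iff

lemma restrictT_eq_of_isConnected_sumTop_iff :
    (∀ Y, @IsConnected _ (sumTop u₁ u₂) Y →
        restrictT (sumTop u₁ u₂) Y = restrictT (sumTop t₁ t₂) Y) ↔
      (∀ Y₁, @IsConnected _ u₁ Y₁ → restrictT u₁ Y₁ = restrictT t₁ Y₁) ∧
        ∀ Y₂, @IsConnected _ u₂ Y₂ → restrictT u₂ Y₂ = restrictT t₂ Y₂ := by
  simp only [isConnected_sumTop_iff, or_imp, forall_and, exists_imp, and_imp]
  rw [forall_comm, forall_comm (α := Set (X₁ ⊕ X₂))]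
  simp only [← imp_forall_iff, forall_eq, restrictT_image_eq_iff Sum.inl_injective,
    restrictT_image_eq_iff Sum.inr_injective, induced_inl_sumTop, induced_inr_sumTop]

lemma adm_sumTop_iff : adm (sumTop u₁ u₂) (sumTop t₁ t₂) ↔ adm u₁ t₁ ∧ adm u₂ t₂ := by
  simp only [adm, finer_sumTop_iff, restrictT_eq_of_isConnected_sumTop_iff, quotRel_sumTop,
    forall_liftRel_and_swap_iff]
  tauto

theorem adm_sumTop_iff_eq_sumTop {u : TopologicalSpace (X₁ ⊕ X₂)} :
    adm u (sumTop t₁ t₂) ↔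
      u = sumTop (u.induced Sum.inl) (u.induced Sum.inr) ∧
        adm (u.induced Sum.inl) t₁ ∧ adm (u.induced Sum.inr) t₂ := by
  constructor
  · intro hu
    have hu_eq := eq_sumTop_induced_of_le hu.1
    rw [hu_eq] at hu
    exact ⟨hu_eq, adm_sumTop_iff.1 hu⟩
  · rintro ⟨hu_eq, h₁, h₂⟩
    rw [hu_eq]
    exact adm_sumTop_iff.2 ⟨h₁, h₂⟩

end Admissible

instance TopologicalSpace.instFinite [Finite X] : Finite (TopologicalSpace X) :=
  Finite.of_injective (fun t : TopologicalSpace X => t.IsOpen) fun _ _ => TopologicalSpace.ext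

lemma GamFun_eq_sum [Fintype (TopologicalSpace X)] (t : TopologicalSpace X)
    [DecidablePred (adm · t)] :
    GamFun t = ∑ t' ∈ Finset.univ.filter (adm · t),
      Finsupp.single t' (1 : ℚ) ⊗ₜ[ℚ] Finsupp.single (quotTop t t') (1 : ℚ) := by
  rw [GamFun, finsum_eq_sum_of_fintype, Finset.sum_filter]
  exact Finset.sum_congr rfl fun t' _ => finsum_eq_if

lemma mProd_single_tmul_single (u₁ : TopologicalSpace X₁) (u₂ : TopologicalSpace X₂) :
    mProd X₁ X₂ (Finsupp.single u₁ (1 : ℚ) ⊗ₜ[ℚ] Finsupp.single u₂ (1 : ℚ)) =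
      Finsupp.single (sumTop u₁ u₂) (1 : ℚ) := by
  simp [mProd, Finsupp.mapDomain_single]

theorem GamFun_sumTop [Finite X₁] [Finite X₂]
    (t₁ : TopologicalSpace X₁) (t₂ : TopologicalSpace X₂) :
    GamFun (sumTop t₁ t₂) =
      (TensorProduct.map (mProd X₁ X₂) (mProd X₁ X₂))
        ((TensorProduct.tensorTensorTensorComm ℚ (TVect X₁) (TVect X₁)
            (TVect X₂) (TVect X₂))
          (GamFun t₁ ⊗ₜ[ℚ] GamFun t₂)) := by
  classical
  let _ : Fintype (TopologicalSpace X₁) := Fintype.ofFinite _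
  let _ : Fintype (TopologicalSpace X₂) := Fintype.ofFinite _
  let _ : Fintype (TopologicalSpace (X₁ ⊕ X₂)) := Fintype.ofFinite _
  rw [GamFun_eq_sum t₁, GamFun_eq_sum t₂, GamFun_eq_sum (sumTop t₁ t₂), TensorProduct.sum_tmul]
  simp only [map_sum, TensorProduct.tmul_sum, TensorProduct.tensorTensorTensorComm_tmul,
    TensorProduct.map_tmul, mProd_single_tmul_single]
  rw [← Finset.sum_product']
  refine (Finset.sum_nbij' (fun p => sumTop p.1 p.2)
    (fun u => (u.induced Sum.inl, u.induced Sum.inr)) ?_ ?_ ?_ ?_ ?_).symm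
  · simp only [Finset.mem_product, Finset.mem_filter, Finset.mem_univ, true_and]
    exact fun p hp => adm_sumTop_iff.2 hp
  · simp only [Finset.mem_product, Finset.mem_filter, Finset.mem_univ, true_and]
    exact fun u hu => (adm_sumTop_iff_eq_sumTop.1 hu).2
  · exact fun p _ => Prod.ext induced_inl_sumTop induced_inr_sumTop
  · simp only [Finset.mem_filter, Finset.mem_univ, true_and]
    exact fun u hu => (adm_sumTop_iff_eq_sumTop.1 hu).1.symm
  · exact fun p _ => by rw [quotTop_sumTop]

/-- Admissible refinements of a product topology are exactly products of
admissible refinements; consequently the internal coproduct is multiplicative. -/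
theorem adm_sumTop_and_Gam_mul [Finite X₁] [Finite X₂]
    (t₁ : TopologicalSpace X₁) (t₂ : TopologicalSpace X₂) :
    (∀ u : TopologicalSpace (X₁ ⊕ X₂),
        adm u (sumTop t₁ t₂) ↔
          (u = sumTop (u.induced Sum.inl) (u.induced Sum.inr) ∧
            adm (u.induced Sum.inl) t₁ ∧ adm (u.induced Sum.inr) t₂)) ∧
    GamFun (sumTop t₁ t₂) =
      (TensorProduct.map (mProd X₁ X₂) (mProd X₁ X₂))
        ((TensorProduct.tensorTensorTensorComm ℚ (TVect X₁) (TVect X₁)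
            (TVect X₂) (TVect X₂))
          (GamFun t₁ ⊗ₜ[ℚ] GamFun t₂)) :=
  ⟨fun _ => adm_sumTop_iff_eq_sumTop, GamFun_sumTop t₁ t₂⟩
end
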